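/- Let Z be a set of positions in an m×n matrix, and assume that Z contains k−1 zeros in independent position (i.e. Z contains a (k−1)-assignment). Then the poset Q_{k,Z} of critical rectangles is a lattice; in particular it has a unique maximal element and a unique minimal element. -/

import Mathlib

open MeasureTheory ProbabilityTheory Finset

namespace Kassign

variable {m n : ℕ}

/-- A `k`-assignment: `k` positions in an `m × n` matrix, no two sharing a row or a column. -/
def IsAssignment (k : ℕ) (A : Finset (Fin m × Fin n)) : Prop :=
  A.card = k ∧ ∀ p ∈ A, ∀ q ∈ A, p ≠ q → p.1 ≠ q.1 ∧ p.2 ≠ q.2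

/-- A cover: a set of rows together with a set of columns. -/
structure Cover (m n : ℕ) where
  rows : Finset (Fin m)
  cols : Finset (Fin n)
deriving DecidableEq

namespace Cover

/-- The size of a cover: the number of rows and columns in it. -/
def size (α : Cover m n) : ℕ := α.rows.card + α.cols.card

/-- `α` covers `Z` if every position of `Z` lies in a row or a column of `α`. -/
def Covers (α : Cover m n) (Z : Finset (Fin m × Fin n)) : Prop :=
  ∀ p ∈ Z, p.1 ∈ α.rows ∨ p.2 ∈ α.cols

/-- The rectangle of a cover: the positions lying in no row or column of the cover. -/
def rect (α : Cover m n) : Finset (Fin m × Fin n) := α.rowsᶜ ×ˢ α.colsᶜ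

/-- The partial order on critical rectangles (modelled by their covers):
`R(α) ≤ R(β)` iff `cols α ⊆ cols β` and `rows α ⊇ rows β`. -/
instance : PartialOrder (Cover m n) where
  le α β := α.cols ⊆ β.cols ∧ β.rows ⊆ α.rows
  le_refl _ := ⟨subset_rfl, subset_rfl⟩
  le_trans _ _ _ h h' := ⟨h.1.trans h'.1, h'.2.trans h.2⟩
  le_antisymm := by
    rintro ⟨r1, c1⟩ ⟨r2, c2⟩ h h'
    obtain ⟨h1, h2⟩ := h
    obtain ⟨h1', h2'⟩ := h'
    simp only [Cover.mk.injEq]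
    exact ⟨Finset.Subset.antisymm h2' h2, Finset.Subset.antisymm h1 h1'⟩

instance : Fintype (Cover m n) :=
  Fintype.ofEquiv (Finset (Fin m) × Finset (Fin n))
    { toFun := fun p => ⟨p.1, p.2⟩
      invFun := fun α => (α.rows, α.cols)
      left_inv := fun _ => rfl
      right_inv := fun _ => rfl }

instance : DecidableRel (α := Cover m n) (· ≤ ·) :=
  fun a b => decidable_of_iff (a.cols ⊆ b.cols ∧ b.rows ⊆ a.rows) Iff.rfl

instance : DecidableRel (α := Cover m n) (· < ·) :=
  fun a b => decidable_of_iff (a ≤ b ∧ ¬ b ≤ a) lt_iff_le_not_ge.symm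

instance (Z : Finset (Fin m × Fin n)) : DecidablePred (fun α : Cover m n => α.Covers Z) :=
  fun α => decidable_of_iff (∀ p ∈ Z, p.1 ∈ α.rows ∨ p.2 ∈ α.cols) Iff.rfl

end Cover

instance {s : ℕ} (c : Fin s → Cover m n) : Decidable (StrictMono c) :=
  decidable_of_iff (∀ a b : Fin s, a < b → c a < c b) Iff.rfl

/-- `Q_{k,Z}` (for `j = k - 1`): the poset of critical rectangles, modelled by the
`j`-covers of `Z`. -/
def criticalCovers (j : ℕ) (Z : Finset (Fin m × Fin n)) : Finset (Cover m n) :=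
  Finset.univ.filter fun α => α.Covers Z ∧ α.size = j

/-- The rate `I(R)` of a set of positions: the sum of the rates of its entries. -/
def rate (lam : Fin m × Fin n → ℝ) (R : Finset (Fin m × Fin n)) : ℝ := ∑ p ∈ R, lam p

/-- `Z` contains `j` zeros in independent position. -/
def HasIndepZeros (j : ℕ) (Z : Finset (Fin m × Fin n)) : Prop :=
  ∃ A ⊆ Z, IsAssignment j A

variable {Ω : Type*} [MeasurableSpace Ω]

/-- `Y` is an exponential random variable with rate `l` under `P`:
`P(Y > t) = e^{-l t}` for all `t ≥ 0`. -/
def IsExponential (P : Measure Ω) (Y : Ω → ℝ) (l : ℝ) : Prop :=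
  Measurable Y ∧ ∀ t : ℝ, 0 ≤ t → P {ω | t < Y ω} = ENNReal.ofReal (Real.exp (-(l * t)))

/-- The random matrix model: entries at positions of `Z` are identically `0`; the other
entries are mutually independent exponential random variables, the entry at `p` having
positive rate `lam p`. -/
def MatrixModel (P : Measure Ω) (Z : Finset (Fin m × Fin n))
    (lam : Fin m × Fin n → ℝ) (X : Fin m × Fin n → Ω → ℝ) : Prop :=
  (∀ p ∈ Z, ∀ ω, X p ω = 0) ∧
  (∀ p ∉ Z, 0 < lam p ∧ IsExponential P (X p) (lam p)) ∧
  iIndepFun (fun p : {p : Fin m × Fin n // p ∉ Z} => X p.1) P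

/-- `min_k(M)`: the value of an optimal `k`-assignment. -/
noncomputable def minAssign (k : ℕ) (X : Fin m × Fin n → Ω → ℝ) (ω : Ω) : ℝ :=
  sInf {v | ∃ A : Finset (Fin m × Fin n), IsAssignment k A ∧ v = ∑ p ∈ A, X p ω}

/-- `min_k(M^r)`: the value of an optimal `k`-assignment avoiding row `r`
(i.e. in the matrix with row `r` deleted). -/
noncomputable def minAssignAvoid (k : ℕ) (r : Fin m) (X : Fin m × Fin n → Ω → ℝ) (ω : Ω) : ℝ :=
  sInf {v | ∃ A : Finset (Fin m × Fin n), IsAssignment k A ∧ (∀ p ∈ A, p.1 ≠ r) ∧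
    v = ∑ p ∈ A, X p ω}

/-- The Laplace transform `L(Y, t) = E[e^{-tY}]`. -/
noncomputable def laplace (P : Measure Ω) (Y : Ω → ℝ) (t : ℝ) : ℝ :=
  ∫ ω, Real.exp (-t * Y ω) ∂P

/-- `φ(R, t) = I(R) / (I(R) + t)`, the Laplace transform of an exponential variable of
rate `I(R)`. -/
noncomputable def phi (lam : Fin m × Fin n → ℝ) (R : Cover m n) (t : ℝ) : ℝ :=
  rate lam R.rect / (rate lam R.rect + t)

/-- `g` is the (two-sided) inverse of `f` in the incidence algebra of the poset `S`. -/
def IsIncidenceInverse {C : Type*} [PartialOrder C] [DecidableEq C]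
    [DecidableRel (α := C) (· ≤ ·)] (S : Finset C) (f g : C → C → ℝ) : Prop :=
  (∀ a ∈ S, ∀ b ∈ S,
    (∑ c ∈ S.filter fun c => a ≤ c ∧ c ≤ b, f a c * g c b) = if a = b then 1 else 0) ∧
  (∀ a ∈ S, ∀ b ∈ S,
    (∑ c ∈ S.filter fun c => a ≤ c ∧ c ≤ b, g a c * f c b) = if a = b then 1 else 0)

/-- The column cover `γ` consisting of the first `j` columns (and no rows). -/
def colCover (m n j : ℕ) : Cover m n :=
  ⟨∅, Finset.univ.filter fun c : Fin n => (c : ℕ) < j⟩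

/-- `K_i`: the intersection of the rectangle of `α` with row `i`. -/
def rowPart (α : Cover m n) (i : Fin m) : Finset (Fin m × Fin n) :=
  α.rect.filter fun p => p.1 = i


/-- If `Z` contains `k-1` zeros in independent position, then the poset
`Q_{k,Z}` of critical rectangles is a lattice: every pair of elements has a least upper
bound and a greatest lower bound in `Q_{k,Z}`; in particular (when `Q_{k,Z}` is nonempty)
it has a unique maximal element and a unique minimal element.

Below: `cover_size_ge`: any cover of `Z` has size at least `j` if `Z` contains `j`
independent zeros. -/
lemma cover_size_ge {j : ℕ} {Z : Finset (Fin m × Fin n)} (hZ : HasIndepZeros j Z)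
    {γ : Cover m n} (hγ : γ.Covers Z) : j ≤ γ.size := by
  classical
  obtain ⟨A, hAZ, hcard, hind⟩ := hZ
  have h := Finset.card_le_card_of_injOn
    (f := fun a : Fin m × Fin n => if a.1 ∈ γ.rows then Sum.inl a.1 else Sum.inr a.2)
    (s := A) (t := γ.rows.image Sum.inl ∪ γ.cols.image Sum.inr)
    (by
      intro a ha
      by_cases hr : a.1 ∈ γ.rows
      · simp [hr]
      · have hc : a.2 ∈ γ.cols := (hγ a (hAZ ha)).resolve_left hr
        simp [hr, hc])
    (by
      intro a ha b hb hab
      by_contra hne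
      obtain ⟨h1, h2⟩ := hind a ha b hb hne
      by_cases hra : a.1 ∈ γ.rows <;> by_cases hrb : b.1 ∈ γ.rows <;>
        simp [hra, hrb] at hab
      · exact h1 hab
      · exact h2 hab)
  rw [hcard] at h
  refine h.trans ?_
  refine (Finset.card_union_le _ _).trans ?_
  rw [Finset.card_image_of_injective _ Sum.inl_injective,
    Finset.card_image_of_injective _ Sum.inr_injective]
  exact le_refl _

/-- The join of two covers. -/
def coverJoin (α β : Cover m n) : Cover m n := ⟨α.rows ∩ β.rows, α.cols ∪ β.cols⟩

/-- The meet of two covers. -/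
def coverMeet (α β : Cover m n) : Cover m n := ⟨α.rows ∪ β.rows, α.cols ∩ β.cols⟩

lemma coverJoin_covers {Z : Finset (Fin m × Fin n)} {α β : Cover m n}
    (hα : α.Covers Z) (hβ : β.Covers Z) : (coverJoin α β).Covers Z := by
  intro p hp
  rcases hα p hp with h | h
  · rcases hβ p hp with h' | h'
    · exact Or.inl (Finset.mem_inter.2 ⟨h, h'⟩)
    · exact Or.inr (Finset.mem_union_right _ h')
  · exact Or.inr (Finset.mem_union_left _ h)

lemma coverMeet_covers {Z : Finset (Fin m × Fin n)} {α β : Cover m n}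
    (hα : α.Covers Z) (hβ : β.Covers Z) : (coverMeet α β).Covers Z := by
  intro p hp
  rcases hα p hp with h | h
  · exact Or.inl (Finset.mem_union_left _ h)
  · rcases hβ p hp with h' | h'
    · exact Or.inl (Finset.mem_union_right _ h')
    · exact Or.inr (Finset.mem_inter.2 ⟨h, h'⟩)

lemma coverJoin_add_coverMeet_size (α β : Cover m n) :
    (coverJoin α β).size + (coverMeet α β).size = α.size + β.size := by
  unfold coverJoin coverMeet Cover.size
  simp only
  have h1 := Finset.card_inter_add_card_union α.rows β.rows
  have h2 := Finset.card_inter_add_card_union α.cols β.cols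
  omega

lemma mem_criticalCovers {j : ℕ} {Z : Finset (Fin m × Fin n)} {α : Cover m n} :
    α ∈ criticalCovers j Z ↔ α.Covers Z ∧ α.size = j := by
  simp [criticalCovers]

lemma coverJoin_mem {j : ℕ} {Z : Finset (Fin m × Fin n)} (hZ : HasIndepZeros j Z)
    {α β : Cover m n} (hα : α ∈ criticalCovers j Z) (hβ : β ∈ criticalCovers j Z) :
    coverJoin α β ∈ criticalCovers j Z ∧ coverMeet α β ∈ criticalCovers j Z := by
  rw [mem_criticalCovers] at hα hβ ⊢
  rw [mem_criticalCovers]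
  have hjc := coverJoin_covers hα.1 hβ.1
  have hmc := coverMeet_covers hα.1 hβ.1
  have h1 := cover_size_ge hZ hjc
  have h2 := cover_size_ge hZ hmc
  have h3 := coverJoin_add_coverMeet_size α β
  rw [hα.2, hβ.2] at h3
  exact ⟨⟨hjc, by omega⟩, ⟨hmc, by omega⟩⟩

lemma le_coverJoin_left (α β : Cover m n) : α ≤ coverJoin α β :=
  ⟨Finset.subset_union_left, Finset.inter_subset_left⟩

lemma le_coverJoin_right (α β : Cover m n) : β ≤ coverJoin α β :=
  ⟨Finset.subset_union_right, Finset.inter_subset_right⟩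

lemma coverJoin_le {α β x : Cover m n} (h1 : α ≤ x) (h2 : β ≤ x) : coverJoin α β ≤ x :=
  ⟨Finset.union_subset h1.1 h2.1, Finset.subset_inter h1.2 h2.2⟩

lemma coverMeet_le_left (α β : Cover m n) : coverMeet α β ≤ α :=
  ⟨Finset.inter_subset_left, Finset.subset_union_left⟩

lemma coverMeet_le_right (α β : Cover m n) : coverMeet α β ≤ β :=
  ⟨Finset.inter_subset_right, Finset.subset_union_right⟩

lemma le_coverMeet {α β x : Cover m n} (h1 : x ≤ α) (h2 : x ≤ β) : x ≤ coverMeet α β :=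
  ⟨Finset.subset_inter h1.1 h2.1, Finset.union_subset h1.2 h2.2⟩

/-- If `Z` contains `k-1` zeros in independent position, then the poset
`Q_{k,Z}` of critical rectangles is a lattice: every pair of elements has a least upper
bound and a greatest lower bound in `Q_{k,Z}`; in particular (when `Q_{k,Z}` is nonempty)
it has a unique maximal element and a unique minimal element. -/
theorem criticalCovers_lattice {m n k : ℕ}
    (Z : Finset (Fin m × Fin n)) (hk : 1 ≤ k)
    (hZ : HasIndepZeros (k - 1) Z) :
    (∀ a ∈ criticalCovers (k - 1) Z, ∀ b ∈ criticalCovers (k - 1) Z,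
      ∃ j ∈ criticalCovers (k - 1) Z, a ≤ j ∧ b ≤ j ∧
        ∀ x ∈ criticalCovers (k - 1) Z, a ≤ x → b ≤ x → j ≤ x) ∧
    (∀ a ∈ criticalCovers (k - 1) Z, ∀ b ∈ criticalCovers (k - 1) Z,
      ∃ g ∈ criticalCovers (k - 1) Z, g ≤ a ∧ g ≤ b ∧
        ∀ x ∈ criticalCovers (k - 1) Z, x ≤ a → x ≤ b → x ≤ g) ∧
    ((criticalCovers (k - 1) Z).Nonempty →
      (∃ top ∈ criticalCovers (k - 1) Z, ∀ x ∈ criticalCovers (k - 1) Z, x ≤ top) ∧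
      (∃ bot ∈ criticalCovers (k - 1) Z, ∀ x ∈ criticalCovers (k - 1) Z, bot ≤ x)) := by
  classical
  set S := criticalCovers (k - 1) Z with hS
  refine ⟨?_, ?_, ?_⟩
  · intro a ha b hb
    obtain ⟨hj, _⟩ := coverJoin_mem hZ ha hb
    exact ⟨coverJoin a b, hj, le_coverJoin_left a b, le_coverJoin_right a b,
      fun x _ h1 h2 => coverJoin_le h1 h2⟩
  · intro a ha b hb
    obtain ⟨_, hm⟩ := coverJoin_mem hZ ha hb
    exact ⟨coverMeet a b, hm, coverMeet_le_left a b, coverMeet_le_right a b,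
      fun x _ h1 h2 => le_coverMeet h1 h2⟩
  · intro hne
    constructor
    · obtain ⟨a, haS, hamax⟩ := Set.Finite.exists_maximalFor id (↑S : Set (Cover m n))
        (S.finite_toSet) (by exact_mod_cast hne)
      refine ⟨a, haS, fun x hx => ?_⟩
      obtain ⟨hj, _⟩ := coverJoin_mem hZ haS hx
      have := le_antisymm (le_coverJoin_left a x) (hamax hj (le_coverJoin_left a x))
      calc x ≤ coverJoin a x := le_coverJoin_right a x
        _ = a := by simpa using this.symm
    · obtain ⟨a, haS, hamin⟩ := Set.Finite.exists_minimalFor id (↑S : Set (Cover m n))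
        (S.finite_toSet) (by exact_mod_cast hne)
      refine ⟨a, haS, fun x hx => ?_⟩
      obtain ⟨_, hm⟩ := coverJoin_mem hZ haS hx
      have := le_antisymm (hamin hm (coverMeet_le_left a x)) (coverMeet_le_left a x)
      calc a = coverMeet a x := by simpa using this
        _ ≤ x := coverMeet_le_right a x

end Kassign
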